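/- For every m ≥ 1 and 0 ≤ a ≤ b with a + b = 2m, there exist unique scalars λ_0, …, λ_m such that in C[α_a : a ≥ 0] with ∂(α_c) = α_{c+1} and q_{c,d} = α_c α_d, one has q_{a,b} = Σ_{k=0}^{m} λ_k ∂^{2k}(q_{0,2m-2k}). -/

import Mathlib

/-!
The quadratics `α_c α_d` with `c + d = 2m` span a space `W` of dimension at most `m + 1`
(already `α_i α_{2m-i}`, `i ≤ m`, span it), and `∂` raises the total index by one, so the
`m + 1` vectors `∂^{2k} q_{0,2m-2k}` lie in `W`. It is enough to show that they are linearly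
independent: they then form a basis of `W`, which contains `q_{a,b}`.

For independence, send `p` to the `ε`-coefficient `Φ p` of `p(1 + ε, 1 + εx, 1 + εx², …)` over
the dual numbers `ℂ[x][ε]`. Then `Φ (α_c α_d) = x^c + x^d`, and on quadratics `Φ ∘ ∂` is
multiplication by `x + 1`, so `Φ (∂^{2k} q_{0,2m-2k}) = (x + 1)^{2k} (1 + x^{2m-2k})`. These
polynomials vanish at `-1` to the pairwise distinct orders `2k`, hence are linearly independent.
-/

open MvPolynomial Module Submodule Set

namespace Polynomial

theorem linearIndependent_of_strictMono_rootMultiplicity {K : Type*} [Field K] (r : K) :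
    ∀ {n : ℕ} {v : Fin n → K[X]}, (∀ i, v i ≠ 0) →
      StrictMono (fun i => rootMultiplicity r (v i)) → LinearIndependent K v
  | 0, _, _, _ => linearIndependent_empty_type
  | n + 1, v, hv, hmono => by
    refine linearIndependent_finSucc.mpr
      ⟨linearIndependent_of_strictMono_rootMultiplicity r (fun i => hv _)
        (hmono.comp Fin.strictMono_succ), fun hmem => ?_⟩
    have hspan : span K (range (Fin.tail v)) ≤
        (Ideal.span {(X - C r) ^ (rootMultiplicity r (v 0) + 1)}).restrictScalars K := by
      refine span_le.mpr ?_
      rintro _ ⟨i, rfl⟩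
      exact Ideal.mem_span_singleton.mpr
        ((le_rootMultiplicity_iff (hv _)).mp (hmono (Fin.succ_pos i)))
    have hdvd := Ideal.mem_span_singleton.mp (hspan hmem)
    exact ((le_rootMultiplicity_iff (hv 0)).mpr hdvd).not_gt (Nat.lt_succ_self _)

theorem linearIndependent_X_add_one_pow_mul {K : Type*} [Field K] (h2 : (2 : K) ≠ 0) (m : ℕ) :
    LinearIndependent K fun k : Fin (m + 1) =>
      (X + 1 : K[X]) ^ (2 * (k : ℕ)) * (1 + X ^ (2 * m - 2 * k)) := by
  have hroot : ∀ k : Fin (m + 1), ¬ IsRoot (1 + X ^ (2 * m - 2 * k) : K[X]) (-1) := by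
    intro k
    rw [IsRoot, eval_add, eval_one, eval_pow, eval_X,
      show 2 * m - 2 * (k : ℕ) = 2 * (m - k) by omega, pow_mul, neg_one_sq, one_pow,
      one_add_one_eq_two]
    exact h2
  have hne : ∀ k : Fin (m + 1), (X + 1 : K[X]) ^ (2 * (k : ℕ)) * (1 + X ^ (2 * m - 2 * k)) ≠ 0 :=
    fun k => mul_ne_zero (pow_ne_zero _ (X_add_C_ne_zero 1)) fun h => hroot k (by simp [h])
  have hmult : ∀ k : Fin (m + 1),
      rootMultiplicity (-1) ((X + 1 : K[X]) ^ (2 * (k : ℕ)) * (1 + X ^ (2 * m - 2 * k))) =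
        2 * k := fun k => by
    rw [rootMultiplicity_mul (hne k), show (X + 1 : K[X]) = X - C (-1) by simp,
      rootMultiplicity_X_sub_C_pow, rootMultiplicity_eq_zero (hroot k), add_zero]
  refine linearIndependent_of_strictMono_rootMultiplicity (-1) hne fun i j hij => ?_
  simp only [hmult]
  omega

end Polynomial

section IndexRaising

variable {R : Type*} [CommSemiring R] (D : Derivation R (MvPolynomial ℕ R) (MvPolynomial ℕ R))

theorem derivation_X_mul_X (hD : ∀ c : ℕ, D (X c) = X (c + 1)) (c d : ℕ) :
    D (X c * X d) = X (c + 1) * X d + X c * X (d + 1) := by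
  rw [Derivation.leibniz, hD, hD, smul_eq_mul, smul_eq_mul]
  ring

variable (R) in
noncomputable def tangentAtOne : MvPolynomial ℕ R →ₗ[R] Polynomial R :=
  (TrivSqZeroExt.sndHom (Polynomial R) (Polynomial R)).restrictScalars R ∘ₗ
    (aeval fun i : ℕ =>
      (1 + TrivSqZeroExt.inr (Polynomial.X ^ i) : DualNumber (Polynomial R))).toLinearMap

theorem tangentAtOne_X_mul_X (c d : ℕ) :
    tangentAtOne R (X c * X d) = Polynomial.X ^ c + Polynomial.X ^ d := by
  simp [tangentAtOne, add_comm]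

theorem tangentAtOne_pow_derivation_X_mul_X (hD : ∀ c : ℕ, D (X c) = X (c + 1)) (n c d : ℕ) :
    tangentAtOne R ((D.toLinearMap ^ n) (X c * X d)) =
      (Polynomial.X + 1) ^ n * (Polynomial.X ^ c + Polynomial.X ^ d) := by
  induction n generalizing c d with
  | zero => simp [tangentAtOne_X_mul_X]
  | succ n ih =>
    rw [pow_succ, Module.End.mul_apply, Derivation.coeFn_coe, derivation_X_mul_X D hD, map_add,
      map_add, ih, ih]
    ring

variable (R) in
noncomputable def quadSpan (n : ℕ) : Submodule R (MvPolynomial ℕ R) :=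
  span R {p | ∃ c d, c + d = n ∧ X c * X d = p}

theorem X_mul_X_mem_quadSpan {c d n : ℕ} (h : c + d = n) : X c * X d ∈ quadSpan R n :=
  subset_span ⟨c, d, h, rfl⟩

theorem derivation_mem_quadSpan (hD : ∀ c : ℕ, D (X c) = X (c + 1)) {n : ℕ}
    {p : MvPolynomial ℕ R} (hp : p ∈ quadSpan R n) : D p ∈ quadSpan R (n + 1) := by
  suffices quadSpan R n ≤ (quadSpan R (n + 1)).comap D.toLinearMap from this hp
  refine span_le.mpr ?_
  rintro _ ⟨c, d, rfl, rfl⟩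
  rw [SetLike.mem_coe, mem_comap, Derivation.coeFn_coe, derivation_X_mul_X D hD]
  exact add_mem (X_mul_X_mem_quadSpan (by ring)) (X_mul_X_mem_quadSpan (by ring))

theorem pow_derivation_mem_quadSpan (hD : ∀ c : ℕ, D (X c) = X (c + 1)) (j : ℕ) {n : ℕ}
    {p : MvPolynomial ℕ R} (hp : p ∈ quadSpan R n) : (D.toLinearMap ^ j) p ∈ quadSpan R (n + j) := by
  induction j with
  | zero => simpa using hp
  | succ j ih =>
    rw [pow_succ', Module.End.mul_apply]
    exact derivation_mem_quadSpan D hD ih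

theorem quadSpan_le_span_range (n : ℕ) :
    quadSpan R n ≤ span R (range fun i : Fin (n / 2 + 1) => X (i : ℕ) * X (n - i)) := by
  refine span_le.mpr ?_
  rintro _ ⟨c, d, rfl, rfl⟩
  rcases le_total c d with h | h
  · exact subset_span ⟨⟨c, by omega⟩, by simp⟩
  · exact subset_span ⟨⟨d, by omega⟩, by simp [mul_comm]⟩

end IndexRaising

section Dimension

variable {K : Type*} [Field K]

instance (n : ℕ) : FiniteDimensional K (quadSpan K n) :=
  have := FiniteDimensional.span_of_finite K
    (finite_range fun i : Fin (n / 2 + 1) => (X (i : ℕ) * X (n - i) : MvPolynomial ℕ K))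
  Submodule.finiteDimensional_of_le (quadSpan_le_span_range n)

theorem finrank_quadSpan_le (n : ℕ) : finrank K (quadSpan K n) ≤ n / 2 + 1 := by
  have := FiniteDimensional.span_of_finite K
    (finite_range fun i : Fin (n / 2 + 1) => (X (i : ℕ) * X (n - i) : MvPolynomial ℕ K))
  exact (Submodule.finrank_mono (quadSpan_le_span_range n)).trans
    ((finrank_range_le_card _).trans (Fintype.card_fin _).le)

end Dimension

theorem LinearIndependent.existsUnique_eq_sum_smul {R M ι : Type*} [Semiring R]
    [AddCommMonoid M] [Module R M] [Fintype ι] {v : ι → M} (hv : LinearIndependent R v) {x : M}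
    (hx : x ∈ span R (range v)) : ∃! c : ι → R, x = ∑ i, c i • v i := by
  obtain ⟨c, hc⟩ := (mem_span_range_iff_exists_fun R).mp hx
  refine ⟨c, hc.symm, fun c' hc' => hv.fintypeLinearCombination_injective ?_⟩
  simp only [Fintype.linearCombination_apply, ← hc', hc]

theorem stmt_17_general (D : Derivation ℂ (MvPolynomial ℕ ℂ) (MvPolynomial ℕ ℂ))
    (hD : ∀ c : ℕ, D (X c) = X (c + 1))
    (m a b : ℕ) (hsum : a + b = 2 * m) :
    ∃! c : Fin (m + 1) → ℂ,
      X a * X b = ∑ k : Fin (m + 1),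
        c k • (D.toLinearMap ^ (2 * (k : ℕ))) (X 0 * X (2 * m - 2 * k)) := by
  set v : Fin (m + 1) → MvPolynomial ℕ ℂ :=
    fun k => (D.toLinearMap ^ (2 * (k : ℕ))) (X 0 * X (2 * m - 2 * k))
  have himage : tangentAtOne ℂ ∘ v = fun k : Fin (m + 1) =>
      (Polynomial.X + 1) ^ (2 * (k : ℕ)) * (1 + Polynomial.X ^ (2 * m - 2 * k)) := by
    ext1 k
    simp [v, tangentAtOne_pow_derivation_X_mul_X D hD]
  have hv : LinearIndependent ℂ v := .of_comp (tangentAtOne ℂ)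
    (himage ▸ Polynomial.linearIndependent_X_add_one_pow_mul two_ne_zero m)
  have hle : span ℂ (range v) ≤ quadSpan ℂ (2 * m) := by
    refine span_le.mpr (range_subset_iff.mpr fun k => ?_)
    have := pow_derivation_mem_quadSpan D hD (2 * k)
      (X_mul_X_mem_quadSpan (zero_add (2 * m - 2 * k)))
    rwa [Nat.sub_add_cancel (by omega)] at this
  have hspan : span ℂ (range v) = quadSpan ℂ (2 * m) := by
    refine eq_of_le_of_finrank_le hle ?_
    rw [finrank_span_eq_card hv, Fintype.card_fin]
    exact (finrank_quadSpan_le _).trans (by omega)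
  exact hv.existsUnique_eq_sum_smul (hspan ▸ X_mul_X_mem_quadSpan hsum)

/-- For m ≥ 1 and 0 ≤ a ≤ b with a + b = 2m, there exist unique scalars λ_0, …, λ_m
with q_{a,b} = Σ_{k=0}^{m} λ_k ∂^{2k}(q_{0,2m-2k}), where q_{c,d} = α_c α_d. -/
theorem stmt_17 (D : Derivation ℂ (MvPolynomial ℕ ℂ) (MvPolynomial ℕ ℂ))
    (hD : ∀ c : ℕ, D (X c) = X (c + 1))
    (m a b : ℕ) (hm : 1 ≤ m) (hab : a ≤ b) (hsum : a + b = 2 * m) :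
    ∃! c : Fin (m + 1) → ℂ,
      X a * X b = ∑ k : Fin (m + 1),
        c k • (D.toLinearMap ^ (2 * (k : ℕ))) (X 0 * X (2 * m - 2 * k)) :=
  stmt_17_general D hD m a b hsum
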